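/- arXiv:1612.02361 — 5 statements merged into one kernel-verified Lean document; each statement's English description precedes it below -/
import Mathlib

section
/- For a finite simple graph G with m edges, minimum degree δ ≥ 2 and maximum degree Δ, HM₁(G) ≤ (Δ+δ)²/(4mΔδ) · M₁(G)². -/
open Finset BigOperators
open scoped Classical

variable {V : Type*} [Fintype V] [DecidableEq V]

/-- Edge degree: `d(e) = d(u) + d(v)` for `e = uv`. -/
def edeg (G : SimpleGraph V) [DecidableRel G.Adj] (e : Sym2 V) : ℕ :=
  Sym2.lift ⟨fun u v => G.degree u + G.degree v, fun u v => by simp [Nat.add_comm]⟩ e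

/-- First hyper Zagreb index. -/
noncomputable def HM1 (G : SimpleGraph V) [DecidableRel G.Adj] : ℝ :=
  ∑ e ∈ G.edgeFinset, (edeg G e : ℝ) ^ 2

/-- First Zagreb index. -/
noncomputable def M1 (G : SimpleGraph V) [DecidableRel G.Adj] : ℝ :=
  ∑ v, (G.degree v : ℝ) ^ 2

/-- Second hyper Zagreb index: sum of `d(e)d(f)` over unordered pairs of adjacent edges. -/
noncomputable def HM2 (G : SimpleGraph V) [DecidableRel G.Adj] : ℝ :=
  (1 / 2) * ∑ e ∈ G.edgeFinset, ∑ f ∈ G.edgeFinset,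
    if e ≠ f ∧ ∃ v, v ∈ e ∧ v ∈ f then (edeg G e : ℝ) * edeg G f else 0

lemma sum_edeg (G : SimpleGraph V) [DecidableRel G.Adj] :
    ∑ e ∈ G.edgeFinset, (edeg G e : ℝ) = M1 G := by
  have key : ∀ e ∈ G.edgeFinset, (edeg G e : ℝ) =
      ∑ v, if v ∈ e then (G.degree v : ℝ) else 0 := by
    intro e he
    induction e with
    | _ u v =>
      rw [SimpleGraph.mem_edgeFinset, SimpleGraph.mem_edgeSet] at he
      have hne : u ≠ v := G.ne_of_adj he
      rw [← Finset.sum_filter]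
      have h2 : ({w ∈ Finset.univ | w ∈ s(u, v)} : Finset V) = {u, v} := by
        ext w; simp [Sym2.mem_iff]
      rw [h2, Finset.sum_pair hne]
      simp [edeg]
  rw [Finset.sum_congr rfl key, Finset.sum_comm]
  unfold M1
  refine Finset.sum_congr rfl fun v _ => ?_
  rw [← Finset.sum_filter, Finset.sum_const, ← SimpleGraph.incidenceFinset_eq_filter,
    SimpleGraph.card_incidenceFinset_eq_degree, nsmul_eq_mul, sq]

theorem stmt5 (G : SimpleGraph V) [DecidableRel G.Adj]
    (m : ℕ) (hm : m = G.edgeFinset.card) (hm1 : 1 ≤ m)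
    (hδ : 2 ≤ G.minDegree) :
    HM1 G ≤ ((G.maxDegree : ℝ) + (G.minDegree : ℝ)) ^ 2 /
      (4 * (m : ℝ) * (G.maxDegree : ℝ) * (G.minDegree : ℝ)) * M1 G ^ 2 := by
  have hcard : 0 < G.edgeFinset.card := by omega
  obtain ⟨e0, he0⟩ := Finset.card_pos.mp hcard
  haveI : Nonempty V := ⟨(Quot.out e0).1⟩
  set D : ℝ := (G.maxDegree : ℝ) with hD
  set d : ℝ := (G.minDegree : ℝ) with hd
  have hd2 : (2 : ℝ) ≤ d := by rw [hd]; exact_mod_cast hδ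
  have hdD : d ≤ D := by
    rw [hd, hD]
    exact_mod_cast le_trans (G.minDegree_le_degree (Classical.arbitrary V))
      (G.degree_le_maxDegree _)
  have hM : (1 : ℝ) ≤ (m : ℝ) := by exact_mod_cast hm1
  have hbound : ∀ e ∈ G.edgeFinset,
      2 * d ≤ (edeg G e : ℝ) ∧ (edeg G e : ℝ) ≤ 2 * D := by
    intro e he
    induction e with
    | _ u v =>
      rw [SimpleGraph.mem_edgeFinset, SimpleGraph.mem_edgeSet] at he
      have h1 := G.minDegree_le_degree u
      have h2 := G.minDegree_le_degree v
      have h3 := G.degree_le_maxDegree u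
      have h4 := G.degree_le_maxDegree v
      constructor
      · show 2 * d ≤ ((G.degree u + G.degree v : ℕ) : ℝ)
        push_cast; rw [hd]; push_cast
        have := (Nat.cast_le (α := ℝ)).mpr h1
        have := (Nat.cast_le (α := ℝ)).mpr h2
        linarith
      · show ((G.degree u + G.degree v : ℕ) : ℝ) ≤ 2 * D
        push_cast; rw [hD]; push_cast
        have := (Nat.cast_le (α := ℝ)).mpr h3
        have := (Nat.cast_le (α := ℝ)).mpr h4
        linarith
  have h1 : HM1 G ≤ 2 * (D + d) * M1 G - 4 * D * d * m := by
    have step : HM1 G ≤ ∑ e ∈ G.edgeFinset,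
        (2 * (D + d) * (edeg G e : ℝ) - 4 * D * d) := by
      apply Finset.sum_le_sum
      intro e he
      obtain ⟨hl, hr⟩ := hbound e he
      nlinarith [hl, hr]
    calc HM1 G ≤ _ := step
      _ = 2 * (D + d) * M1 G - 4 * D * d * m := by
          rw [Finset.sum_sub_distrib, ← Finset.mul_sum, sum_edeg, Finset.sum_const,
            nsmul_eq_mul, ← hm]
          ring
  have hdpos : (0:ℝ) < d := by linarith
  have hDpos : (0:ℝ) < D := by linarith
  have hpos : 0 < 4 * (m : ℝ) * D * d := by positivity
  rw [div_mul_eq_mul_div, le_div_iff₀ hpos]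
  nlinarith [sq_nonneg ((D + d) * M1 G - 4 * (m : ℝ) * D * d),
    mul_nonneg (le_of_lt hpos) (sub_nonneg.mpr h1)]
end

section
/- If a₁,…,a_m and b₁,…,b_m are positive reals with a ≤ a_i ≤ A and b ≤ b_i ≤ B for all i, then (Σ a_i²)(Σ b_i²) ≤ (1/4)(√(AB/(ab)) + √(ab/(AB)))² (Σ a_i b_i)². -/
open Finset BigOperators
open scoped Classical

variable {V : Type*} [Fintype V] [DecidableEq V]

/-- Pólya–Szegő inequality. -/
theorem stmt6 (m : ℕ) (a b : Fin m → ℝ) (a₀ A b₀ B : ℝ)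
    (ha₀ : 0 < a₀) (hb₀ : 0 < b₀)
    (ha : ∀ i, a₀ ≤ a i ∧ a i ≤ A) (hb : ∀ i, b₀ ≤ b i ∧ b i ≤ B) :
    (∑ i, a i ^ 2) * (∑ i, b i ^ 2) ≤
      (1 / 4) * (Real.sqrt (A * B / (a₀ * b₀)) + Real.sqrt (a₀ * b₀ / (A * B))) ^ 2 *
        (∑ i, a i * b i) ^ 2 := by
  rcases Nat.eq_zero_or_pos m with hm | hm
  · subst hm; simp
  obtain ⟨i0⟩ : Nonempty (Fin m) := ⟨⟨0, hm⟩⟩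
  have hA : 0 < A := lt_of_lt_of_le ha₀ (le_trans (ha i0).1 (ha i0).2)
  have hB : 0 < B := lt_of_lt_of_le hb₀ (le_trans (hb i0).1 (hb i0).2)
  set Sa := ∑ i, a i ^ 2 with hSa
  set Sb := ∑ i, b i ^ 2 with hSb
  set T := ∑ i, a i * b i with hT
  have key : ∀ i, b₀ * B * a i ^ 2 + a₀ * A * b i ^ 2 ≤ (A * B + a₀ * b₀) * (a i * b i) := by
    intro i
    obtain ⟨h1, h2⟩ := ha i
    obtain ⟨h3, h4⟩ := hb i
    have f1 : 0 ≤ B * a i - a₀ * b i := by nlinarith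
    have f2 : 0 ≤ A * b i - b₀ * a i := by nlinarith
    nlinarith [mul_nonneg f1 f2]
  have hsum : b₀ * B * Sa + a₀ * A * Sb ≤ (A * B + a₀ * b₀) * T := by
    have := Finset.sum_le_sum (fun i (_ : i ∈ Finset.univ) => key i)
    simpa [hSa, hSb, hT, Finset.mul_sum, Finset.sum_add_distrib] using this
  have hSann : 0 ≤ Sa := Finset.sum_nonneg fun i _ => sq_nonneg _
  have hSbnn : 0 ≤ Sb := Finset.sum_nonneg fun i _ => sq_nonneg _
  have hlhs : 0 ≤ b₀ * B * Sa + a₀ * A * Sb := by positivity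
  have hsq := mul_self_le_mul_self hlhs hsum
  have hxy : Real.sqrt (A * B / (a₀ * b₀)) * Real.sqrt (a₀ * b₀ / (A * B)) = 1 := by
    rw [← Real.sqrt_mul (by positivity),
      show A * B / (a₀ * b₀) * (a₀ * b₀ / (A * B)) = 1 by field_simp]
    exact Real.sqrt_one
  have hsq1 : Real.sqrt (A * B / (a₀ * b₀)) ^ 2 = A * B / (a₀ * b₀) :=
    Real.sq_sqrt (by positivity)
  have hsq2 : Real.sqrt (a₀ * b₀ / (A * B)) ^ 2 = a₀ * b₀ / (A * B) :=
    Real.sq_sqrt (by positivity)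
  have hexp : (Real.sqrt (A * B / (a₀ * b₀)) + Real.sqrt (a₀ * b₀ / (A * B))) ^ 2
      = A * B / (a₀ * b₀) + 2 + a₀ * b₀ / (A * B) := by
    rw [add_sq, hsq1, hsq2, mul_assoc, hxy]; ring
  rw [hexp]
  have hRHS : (1 / 4 : ℝ) * (A * B / (a₀ * b₀) + 2 + a₀ * b₀ / (A * B)) =
      (A * B + a₀ * b₀) ^ 2 / (4 * (a₀ * b₀) * (A * B)) := by
    field_simp; ring
  rw [hRHS, div_mul_eq_mul_div, le_div_iff₀ (by positivity)]
  nlinarith [hsq, sq_nonneg (b₀ * B * Sa - a₀ * A * Sb)]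
end

section
/- For a finite simple graph G with m edges, maximum degree Δ and minimum degree δ, HM₁(G) ≤ 2(Δ+δ)M₁(G) − 4mΔδ, with equality if and only if every edge degree equals 2Δ or 2δ. -/
open Finset BigOperators
open scoped Classical

variable {V : Type*} [Fintype V] [DecidableEq V]

set_option linter.unusedSectionVars false

lemma M1_eq (G : SimpleGraph V) [DecidableRel G.Adj] :
    ∑ v, (G.degree v : ℝ) ^ 2 = ∑ e ∈ G.edgeFinset, (edeg G e : ℝ) := by
  have h1 : ∀ e ∈ G.edgeFinset, (edeg G e : ℝ) = ∑ v, (if v ∈ e then (G.degree v : ℝ) else 0) := by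
    intro e he
    induction e using Sym2.ind with
    | _ u v =>
      have huv : u ≠ v := G.ne_of_adj ((SimpleGraph.mem_edgeSet G).1 (SimpleGraph.mem_edgeFinset.1 he))
      have : ∀ w : V, (if w ∈ s(u,v) then (G.degree w : ℝ) else 0)
          = if w ∈ ({u, v} : Finset V) then (G.degree w : ℝ) else 0 := by
        intro w; simp [Sym2.mem_iff]
      rw [Finset.sum_congr rfl fun w _ => this w, ← Finset.sum_filter,
        Finset.filter_mem_eq_inter, Finset.univ_inter, Finset.sum_pair huv]
      simp [edeg]
  rw [Finset.sum_congr rfl h1, Finset.sum_comm]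
  refine Finset.sum_congr rfl fun v _ => ?_
  rw [← Finset.sum_filter, Finset.sum_const, nsmul_eq_mul]
  have : G.edgeFinset.filter (fun e => v ∈ e) = G.incidenceFinset v := by
    ext e
    simp [SimpleGraph.mem_incidenceFinset, SimpleGraph.incidenceSet, and_comm,
      SimpleGraph.mem_edgeFinset, SimpleGraph.mem_edgeSet]
  rw [this, SimpleGraph.card_incidenceFinset_eq_degree]
  ring

lemma edeg_bounds (G : SimpleGraph V) [DecidableRel G.Adj] {e : Sym2 V}
    (he : e ∈ G.edgeFinset) :
    2 * G.minDegree ≤ edeg G e ∧ edeg G e ≤ 2 * G.maxDegree := by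
  induction e using Sym2.ind with
  | _ u v =>
    have hd : (edeg G s(u,v)) = G.degree u + G.degree v := by simp [edeg]
    constructor
    · rw [hd, two_mul]
      exact Nat.add_le_add (G.minDegree_le_degree u) (G.minDegree_le_degree v)
    · rw [hd, two_mul]
      exact Nat.add_le_add (G.degree_le_maxDegree u) (G.degree_le_maxDegree v)

theorem stmt9 (G : SimpleGraph V) [DecidableRel G.Adj]
    (m : ℕ) (hm : m = G.edgeFinset.card) :
    HM1 G ≤ 2 * ((G.maxDegree : ℝ) + (G.minDegree : ℝ)) * M1 G -
      4 * (m : ℝ) * (G.maxDegree : ℝ) * (G.minDegree : ℝ) ∧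
    (HM1 G = 2 * ((G.maxDegree : ℝ) + (G.minDegree : ℝ)) * M1 G -
        4 * (m : ℝ) * (G.maxDegree : ℝ) * (G.minDegree : ℝ) ↔
      ∀ e ∈ G.edgeFinset, edeg G e = 2 * G.maxDegree ∨ edeg G e = 2 * G.minDegree) := by
  set Δ : ℝ := (G.maxDegree : ℝ) with hΔ
  set δ : ℝ := (G.minDegree : ℝ) with hδ
  have key : 2 * (Δ + δ) * M1 G - 4 * (m : ℝ) * Δ * δ - HM1 G
      = ∑ e ∈ G.edgeFinset, (2 * Δ - (edeg G e : ℝ)) * ((edeg G e : ℝ) - 2 * δ) := by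
    have : ∀ e ∈ G.edgeFinset, (2 * Δ - (edeg G e : ℝ)) * ((edeg G e : ℝ) - 2 * δ)
        = 2 * (Δ + δ) * (edeg G e : ℝ) - (edeg G e : ℝ) ^ 2 - 4 * Δ * δ := by
      intro e _; ring
    rw [Finset.sum_congr rfl this, Finset.sum_sub_distrib, Finset.sum_sub_distrib,
      ← Finset.mul_sum, Finset.sum_const, nsmul_eq_mul]
    unfold HM1 M1
    rw [M1_eq, hm]
    ring
  have hterm : ∀ e ∈ G.edgeFinset,
      0 ≤ (2 * Δ - (edeg G e : ℝ)) * ((edeg G e : ℝ) - 2 * δ) := by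
    intro e he
    obtain ⟨h1, h2⟩ := edeg_bounds G he
    have h1' : 2 * δ ≤ (edeg G e : ℝ) := by rw [hδ]; exact_mod_cast h1
    have h2' : (edeg G e : ℝ) ≤ 2 * Δ := by rw [hΔ]; exact_mod_cast h2
    exact mul_nonneg (by linarith) (by linarith)
  have hsum : 0 ≤ ∑ e ∈ G.edgeFinset, (2 * Δ - (edeg G e : ℝ)) * ((edeg G e : ℝ) - 2 * δ) :=
    Finset.sum_nonneg hterm
  constructor
  · linarith [key, hsum]
  · constructor
    · intro h
      have h0 : ∑ e ∈ G.edgeFinset, (2 * Δ - (edeg G e : ℝ)) * ((edeg G e : ℝ) - 2 * δ) = 0 := by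
        linarith [key]
      intro e he
      have := (Finset.sum_eq_zero_iff_of_nonneg hterm).1 h0 e he
      rcases mul_eq_zero.1 this with h' | h'
      · left
        have : (edeg G e : ℝ) = 2 * Δ := by linarith
        rw [hΔ] at this; exact_mod_cast this
      · right
        have : (edeg G e : ℝ) = 2 * δ := by linarith
        rw [hδ] at this; exact_mod_cast this
    · intro h
      have h0 : ∑ e ∈ G.edgeFinset, (2 * Δ - (edeg G e : ℝ)) * ((edeg G e : ℝ) - 2 * δ) = 0 := by
        refine Finset.sum_eq_zero fun e he => ?_
        rcases h e he with h' | h'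
        · have : (edeg G e : ℝ) = 2 * Δ := by rw [hΔ]; exact_mod_cast h'
          rw [this]; ring
        · have : (edeg G e : ℝ) = 2 * δ := by rw [hδ]; exact_mod_cast h'
          rw [this]; ring
      linarith [key]
end

section
/- If a₁,…,a_m and b₁,…,b_m are real numbers with p·a_i ≤ b_i ≤ P·a_i for all i, then Σ b_i² + pP Σ a_i² ≤ (p+P) Σ a_i b_i, with equality iff for each i, b_i = p·a_i or b_i = P·a_i. -/
open Finset BigOperators
open scoped Classical

variable {V : Type*} [Fintype V] [DecidableEq V]

/-- Diaz–Metcalf inequality. -/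
theorem stmt10 (m : ℕ) (a b : Fin m → ℝ) (p P : ℝ)
    (h : ∀ i, p * a i ≤ b i ∧ b i ≤ P * a i) :
    (∑ i, b i ^ 2) + p * P * (∑ i, a i ^ 2) ≤ (p + P) * ∑ i, a i * b i ∧
    ((∑ i, b i ^ 2) + p * P * (∑ i, a i ^ 2) = (p + P) * ∑ i, a i * b i ↔
      ∀ i, b i = p * a i ∨ b i = P * a i) := by
  have key : (p + P) * (∑ i, a i * b i) - ((∑ i, b i ^ 2) + p * P * (∑ i, a i ^ 2))
      = ∑ i, (P * a i - b i) * (b i - p * a i) := by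
    rw [Finset.mul_sum, Finset.mul_sum, ← Finset.sum_add_distrib, ← Finset.sum_sub_distrib]
    apply Finset.sum_congr rfl
    intro i _
    ring
  have hterm : ∀ i, 0 ≤ (P * a i - b i) * (b i - p * a i) := fun i =>
    mul_nonneg (by linarith [(h i).2]) (by linarith [(h i).1])
  have hsum : 0 ≤ ∑ i, (P * a i - b i) * (b i - p * a i) :=
    Finset.sum_nonneg fun i _ => hterm i
  constructor
  · linarith [key, hsum]
  · constructor
    · intro heq
      have hz : ∑ i, (P * a i - b i) * (b i - p * a i) = 0 := by linarith [key]
      have := (Finset.sum_eq_zero_iff_of_nonneg (fun i _ => hterm i)).mp hz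
      intro i
      have hi := this i (Finset.mem_univ i)
      rcases mul_eq_zero.mp hi with h1 | h1
      · right; linarith
      · left; linarith
    · intro hb
      have : ∑ i, (P * a i - b i) * (b i - p * a i) = 0 := by
        apply Finset.sum_eq_zero
        intro i _
        rcases hb i with h1 | h1 <;> rw [h1] <;> ring
      linarith [key]
end

section
/- For a finite simple graph G with n vertices and m edges, HM₁(G) ≤ 4m(Δ+δ)² − Δδ(n + 4m). -/
open Finset BigOperators
open scoped Classical

variable {V : Type*} [Fintype V] [DecidableEq V]

theorem stmt11 (G : SimpleGraph V) [DecidableRel G.Adj]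
    (n m : ℕ) (hn : n = Fintype.card V) (hm : m = G.edgeFinset.card) :
    HM1 G ≤ 4 * (m : ℝ) * ((G.maxDegree : ℝ) + (G.minDegree : ℝ)) ^ 2 -
      (G.maxDegree : ℝ) * (G.minDegree : ℝ) * ((n : ℝ) + 4 * (m : ℝ)) := by
  classical
  set Δ := G.maxDegree with hΔdef
  set δ := G.minDegree with hδdef
  -- each edge degree is at most 2Δ
  have hedge : ∀ e ∈ G.edgeFinset, edeg G e ≤ 2 * Δ := by
    intro e _
    induction e using Sym2.ind with
    | _ u v =>
      have h1 := G.degree_le_maxDegree u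
      have h2 := G.degree_le_maxDegree v
      simp only [edeg, Sym2.lift_mk]
      omega
  -- HM1 ≤ m * (2Δ)^2
  have h1 : HM1 G ≤ (m : ℝ) * (2 * (Δ : ℝ)) ^ 2 := by
    rw [HM1, hm]
    calc ∑ e ∈ G.edgeFinset, (edeg G e : ℝ) ^ 2
        ≤ ∑ _e ∈ G.edgeFinset, (2 * (Δ : ℝ)) ^ 2 := by
          apply Finset.sum_le_sum
          intro e he
          have h := hedge e he
          have h' : (edeg G e : ℝ) ≤ 2 * (Δ : ℝ) := by exact_mod_cast h
          have h0 : (0 : ℝ) ≤ (edeg G e : ℝ) := Nat.cast_nonneg _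
          nlinarith
      _ = (G.edgeFinset.card : ℝ) * (2 * (Δ : ℝ)) ^ 2 := by
          rw [Finset.sum_const, nsmul_eq_mul]
  -- n * δ ≤ 2 * m
  have hnδ : n * δ ≤ 2 * m := by
    have hsum : ∑ v : V, δ ≤ ∑ v : V, G.degree v :=
      Finset.sum_le_sum fun v _ => G.minDegree_le_degree v
    rw [Finset.sum_const, smul_eq_mul, G.sum_degrees_eq_twice_card_edges] at hsum
    calc n * δ = Fintype.card V * δ := by rw [hn]
      _ ≤ 2 * G.edgeFinset.card := by
          simpa [G.edgeFinset_card] using hsum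
      _ = 2 * m := by rw [hm]
  have hnδ' : (n : ℝ) * (δ : ℝ) ≤ 2 * (m : ℝ) := by exact_mod_cast hnδ
  have hm0 : (0 : ℝ) ≤ (m : ℝ) := Nat.cast_nonneg _
  have hΔ0 : (0 : ℝ) ≤ (Δ : ℝ) := Nat.cast_nonneg _
  have hδ0 : (0 : ℝ) ≤ (δ : ℝ) := Nat.cast_nonneg _
  refine h1.trans ?_
  rcases Nat.eq_zero_or_pos δ with h | h
  · rw [h]; push_cast; ring_nf; nlinarith
  · have hδ1 : (1 : ℝ) ≤ (δ : ℝ) := by exact_mod_cast h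
    nlinarith [mul_nonneg (mul_nonneg hm0 hΔ0) hδ0, mul_nonneg hm0 (mul_nonneg hδ0 hδ0),
      mul_le_mul_of_nonneg_left hnδ' hΔ0]
end
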